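/- arXiv:2110.15291 — 6 statements merged into one kernel-verified Lean document; each statement's English description precedes it below -/
import Mathlib

section
/- Let G be a graph. The chromatic polynomial of G equals the polynomial obtained from the chromatic symmetric function of G by expanding over the power-sum basis and replacing each p_λ with x^{ℓ(λ)}. That is, if X_G = Σ_λ a_λ p_λ, then χ_G(x) = Σ_λ a_λ x^{ℓ(λ)}. -/
/-
Specialise `x_0 = … = x_{k-1} = t` and `x_i = 0` for `i ≥ k`: this is a ring homomorphism to
`ℚ⟦t⟧`, which sends `p_m` to `k t^m`, hence `p_λ` to `k^{ℓ(λ)} t^n`. The coefficient of `t^n` in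
the image of `X_G` counts the proper colourings using only the colours `0, …, k-1`, i.e. it is
`χ_G(k)`. So both polynomials agree at every positive integer `k`.
-/

open Polynomial

noncomputable section
open scoped Classical

/-- The weighted chromatic symmetric function of a (vertex-weighted) finite simple graph,
as a formal power series in the variables `x_0, x_1, x_2, …`: the coefficient of a monomial
`d` is the number of proper colourings `κ : V → ℕ` such that for each colour `i`, the total
weight of vertices coloured `i` is `d i`. -/
def wcsf {V : Type} [Fintype V] (G : SimpleGraph V) (ω : V → ℕ) : MvPowerSeries ℕ ℚ :=
  fun d => (Nat.card {κ : V → ℕ // (∀ u v, G.Adj u v → κ u ≠ κ v) ∧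
    ∀ i : ℕ, ∑ v ∈ Finset.univ.filter (fun v => κ v = i), ω v = d i} : ℚ)

/-- The (unweighted) chromatic symmetric function. -/
def csf {V : Type} [Fintype V] (G : SimpleGraph V) : MvPowerSeries ℕ ℚ :=
  wcsf G (fun _ => 1)

/-- `XP μ` is the chromatic symmetric function of the disjoint union of paths whose sizes are
given by the multiset `μ` (the chromatic symmetric function is multiplicative over disjoint
unions). -/
def XP (μ : Multiset ℕ) : MvPowerSeries ℕ ℚ :=
  (μ.map (fun m => csf (SimpleGraph.pathGraph m))).prod

/-- The power-sum symmetric function `p_n = Σ_i x_i^n`. -/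
def psum (n : ℕ) : MvPowerSeries ℕ ℚ :=
  fun d => if ∃ i, d = Finsupp.single i n then 1 else 0

/-- The power-sum symmetric function `p_μ`. -/
def pp (μ : Multiset ℕ) : MvPowerSeries ℕ ℚ := (μ.map psum).prod

/-- `P` is the chromatic polynomial of `G`: `P(k)` counts proper `k`-colourings for all
positive integers `k`. -/
def IsChromaticPoly {V : Type} [Fintype V] (G : SimpleGraph V) (P : Polynomial ℚ) : Prop :=
  ∀ k : ℕ, 0 < k → P.eval (k : ℚ) =
    Nat.card {c : V → Fin k // ∀ u v, G.Adj u v → c u ≠ c v}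

/-- The polynomial `Σ_λ a_λ x^{ℓ(λ)}` built from coefficients `a` indexed by partitions of
`n`; when `a` gives the path-basis coefficients of `X_G` this is the tree polynomial `τ_G`,
and when `a` gives the power-sum coefficients it is the chromatic polynomial. -/
def basisPoly (n : ℕ) (a : n.Partition → ℚ) : Polynomial ℚ :=
  ∑ l : n.Partition, Polynomial.C (a l) * Polynomial.X ^ l.parts.card

/-- The substitution `x_i ↦ t` for `i < k` and `x_i ↦ 0` for `i ≥ k`. -/
def principalSpecialization {R : Type*} [CommSemiring R] (k : ℕ) :
    MvPowerSeries ℕ R →ₐ[R] PowerSeries R :=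
  (MvPowerSeries.rename fun _ : Fin k => ()).comp (MvPowerSeries.killCompl Fin.valEmbedding)

lemma coeff_principalSpecialization {R : Type*} [CommSemiring R] (k n : ℕ)
    (f : MvPowerSeries ℕ R) :
    PowerSeries.coeff n (principalSpecialization k f) =
      ∑ y ∈ (Finset.univ : Finset (Fin k)).finsuppAntidiag n,
        MvPowerSeries.coeff (y.embDomain Fin.valEmbedding) f := by
  rw [PowerSeries.coeff, principalSpecialization, AlgHom.comp_apply, MvPowerSeries.coeff_rename]
  refine Finset.sum_congr ?_ fun _ _ => rfl
  ext y
  simp only [Set.Finite.mem_toFinset, Set.mem_preimage, Set.mem_singleton_iff,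
    Finset.mem_finsuppAntidiag, Finset.subset_univ, and_true, Finsupp.unique_ext_iff]
  rw [Finsupp.mapDomain, Finsupp.sum_apply, Finsupp.sum_fintype _ _ (by simp)]
  simp

lemma coeff_psum (m : ℕ) (d : ℕ →₀ ℕ) :
    MvPowerSeries.coeff d (psum m) = if ∃ i, d = Finsupp.single i m then 1 else 0 := rfl

open MvPowerSeries in
lemma killCompl_psum {k m : ℕ} (hm : m ≠ 0) :
    killCompl Fin.valEmbedding (psum m) = ∑ i : Fin k, (X i : MvPowerSeries (Fin k) ℚ) ^ m := by
  ext y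
  simp only [coeff_killCompl, map_sum, X_pow_eq, MvPowerSeries.coeff_monomial]
  by_cases hy : ∃ i, y = Finsupp.single i m
  · obtain ⟨i, rfl⟩ := hy
    simp [Finsupp.embDomain_single, coeff_psum, Finsupp.single_left_inj hm]
  · push Not at hy
    simp only [hy, if_false, Finset.sum_const_zero, coeff_psum, ite_eq_right_iff, one_ne_zero,
      imp_false, not_exists]
    intro i hi
    have hi_mem : i ∈ (y.embDomain Fin.valEmbedding).support := by simp [hi, hm]
    rw [Finsupp.support_embDomain, Finset.mem_map] at hi_mem
    obtain ⟨j, -, rfl⟩ := hi_mem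
    exact hy j (Finsupp.embDomain_injective _ (hi.trans (Finsupp.embDomain_single _ _ _).symm))

lemma principalSpecialization_psum (k : ℕ) {m : ℕ} (hm : m ≠ 0) :
    principalSpecialization k (psum m) = (k : PowerSeries ℚ) * PowerSeries.X ^ m := by
  rw [principalSpecialization, AlgHom.comp_apply, killCompl_psum hm, map_sum]
  simp only [map_pow, MvPowerSeries.rename_X, Finset.sum_const, Finset.card_univ,
    Fintype.card_fin, nsmul_eq_mul]
  rfl

lemma principalSpecialization_pp (k : ℕ) {μ : Multiset ℕ} (hμ : ∀ m ∈ μ, m ≠ 0) :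
    principalSpecialization k (pp μ) =
      (k : PowerSeries ℚ) ^ Multiset.card μ * PowerSeries.X ^ μ.sum := by
  induction μ using Multiset.induction with
  | empty => simp [pp]
  | cons m μ ih =>
    rw [Multiset.forall_mem_cons] at hμ
    rw [pp, Multiset.map_cons, Multiset.prod_cons, map_mul, principalSpecialization_psum k hμ.1,
      ← pp, ih hμ.2, Multiset.card_cons, Multiset.sum_cons]
    ring

lemma coeff_principalSpecialization_pp_parts (k : ℕ) {n : ℕ} (l : n.Partition) :
    PowerSeries.coeff n (principalSpecialization k (pp l.parts)) = (k : ℚ) ^ l.parts.card := by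
  rw [principalSpecialization_pp k fun m hm => (l.parts_pos hm).ne', l.parts_sum,
    ← map_natCast PowerSeries.C, ← map_pow, PowerSeries.coeff_C_mul_X_pow, if_pos rfl]

def colourCount {V ι : Type*} [Fintype V] (κ : V → ι) : ι →₀ ℕ :=
  ∑ v, Finsupp.single (κ v) 1

section ColourCount

variable {V ι τ : Type*} [Fintype V]

lemma colourCount_apply (κ : V → ι) (i : ι) :
    colourCount κ i = (Finset.univ.filter fun v => κ v = i).card := by
  rw [colourCount, Finsupp.finsetSum_apply, Finset.card_filter]
  simp only [Finsupp.single_apply]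

lemma degree_colourCount (κ : V → ι) : (colourCount κ).degree = Fintype.card V := by
  simp [colourCount]

lemma colourCount_comp_embedding (e : ι ↪ τ) (c : V → ι) :
    colourCount (e ∘ c) = (colourCount c).embDomain e := by
  rw [colourCount, colourCount, ← Finsupp.embDomain.addMonoidHom_apply, map_sum]
  simp [Finsupp.embDomain_single]

lemma card_proper_colourCount_embDomain (G : SimpleGraph V) (e : ι ↪ τ) (y : ι →₀ ℕ) :
    Nat.card {κ : V → τ // (∀ u v, G.Adj u v → κ u ≠ κ v) ∧ colourCount κ = y.embDomain e} =
      Nat.card {c : V → ι // (∀ u v, G.Adj u v → c u ≠ c v) ∧ colourCount c = y} := by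
  symm
  refine Nat.card_eq_of_bijective (fun c => ⟨e ∘ c.1, fun u v huv h => c.2.1 u v huv (e.injective h),
    by rw [colourCount_comp_embedding, c.2.2]⟩) ⟨fun c c' h => ?_, fun κ => ?_⟩
  · exact Subtype.ext (funext fun v => e.injective (congrFun (congrArg Subtype.val h) v))
  obtain ⟨κ, hproper, hcount⟩ := κ
  have hrange : ∀ v, ∃ i, e i = κ v := by
    intro v
    have hv : κ v ∈ (colourCount κ).support := by
      rw [Finsupp.mem_support_iff, colourCount_apply, ← Nat.pos_iff_ne_zero, Finset.card_pos]
      exact ⟨v, by simp⟩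
    rw [hcount, Finsupp.support_embDomain, Finset.mem_map] at hv
    obtain ⟨i, -, hi⟩ := hv
    exact ⟨i, hi⟩
  choose c hc using hrange
  obtain rfl : e ∘ c = κ := funext hc
  refine ⟨⟨c, fun u v huv h => hproper u v huv (congrArg e h), ?_⟩, rfl⟩
  rw [colourCount_comp_embedding] at hcount
  exact Finsupp.embDomain_injective e hcount

end ColourCount

lemma coeff_csf {V : Type} [Fintype V] (G : SimpleGraph V) (d : ℕ →₀ ℕ) :
    MvPowerSeries.coeff d (csf G) =
      Nat.card {κ : V → ℕ // (∀ u v, G.Adj u v → κ u ≠ κ v) ∧ colourCount κ = d} := by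
  refine congrArg Nat.cast (Nat.card_congr (Equiv.subtypeEquivRight fun κ => and_congr_right
    fun _ => ?_))
  simp only [Finsupp.ext_iff, colourCount_apply, Finset.sum_const, smul_eq_mul, mul_one]
  convert Iff.rfl

lemma coeff_principalSpecialization_csf {V : Type} [Fintype V] (G : SimpleGraph V) (k : ℕ) :
    PowerSeries.coeff (Fintype.card V) (principalSpecialization k (csf G)) =
      Nat.card {c : V → Fin k // ∀ u v, G.Adj u v → c u ≠ c v} := by
  simp only [coeff_principalSpecialization, coeff_csf, card_proper_colourCount_embDomain,
    Nat.card_eq_fintype_card, Fintype.card_subtype]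
  rw [← Nat.cast_sum, Finset.card_eq_sum_card_fiberwise (f := colourCount)
    (t := Finset.univ.finsuppAntidiag (Fintype.card V))]
  · simp [Finset.filter_filter]
  · intro c _
    simp [Finset.mem_finsuppAntidiag, ← Finsupp.degree_eq_sum, degree_colourCount]

/-- if `X_G = Σ_{λ ⊢ n} a_λ p_λ` is the power-sum expansion of the chromatic
symmetric function of a graph `G` on `n` vertices, then the chromatic polynomial of `G` is
`χ_G(x) = Σ_λ a_λ x^{ℓ(λ)}`. -/
theorem stmt_5 {V : Type} [Fintype V] (G : SimpleGraph V) (n : ℕ)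
    (hn : Fintype.card V = n) (a : n.Partition → ℚ)
    (ha : csf G = ∑ l : n.Partition, a l • pp l.parts)
    (P : Polynomial ℚ) (hP : IsChromaticPoly G P) :
    P = basisPoly n a := by
  subst hn
  refine Polynomial.eq_of_infinite_eval_eq _ _
    (((Set.Ioi_infinite 0).image Nat.cast_injective.injOn).mono ?_)
  rintro _ ⟨k, hk, rfl⟩
  rw [Set.mem_ofPred_eq, hP k hk, ← coeff_principalSpecialization_csf, ha, map_sum, map_sum]
  simp [basisPoly, Polynomial.eval_finsetSum, coeff_principalSpecialization_pp_parts]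
end
end

section
/- Let {T_n} be any family of trees with T_n having n vertices, and {X_{T_λ}} the corresponding tree basis of symmetric functions. For any (vertex-weighted) graph (G,ω) and any k, the sum of the coefficients of X_{(G,ω)} over tree-basis elements X_{T_λ} with ℓ(λ) = k equals the sum of the coefficients over path-basis elements X_{P_λ} with ℓ(λ) = k. That is, the tree polynomial is independent of the choice of tree basis. -/
open Polynomial

noncomputable section
open scoped Classical

/-!
Specialising `x_0 = ⋯ = x_(k-1) = 1` and all other variables to `0` and keeping the degree `N`
part is a linear functional that is multiplicative on homogeneous series and sends the
chromatic symmetric function of a graph to its number of proper `k`-colourings. A tree on `m`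
vertices has `k (k - 1)^(m - 1)` proper `k`-colourings, whatever its shape, so applying the
functional to the two expansions gives
`∑ a_λ k^ℓ(λ) (k - 1)^(N - ℓ(λ)) = ∑ b_λ k^ℓ(λ) (k - 1)^(N - ℓ(λ))` for every `k`. After
division by `(k - 1)^N`, the polynomials `∑ a_λ x^ℓ(λ)` and `∑ b_λ x^ℓ(λ)` agree at the
infinitely many points `k / (k - 1)`, so they are equal.
-/

open Finset

namespace MvPowerSeries

variable {σ R : Type*} [CommSemiring R]

lemma isHomogeneous_iff_degree {f : MvPowerSeries σ R} {p : ℕ} :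
    f.IsHomogeneous p ↔ ∀ d, coeff d f ≠ 0 → d.degree = p := by
  simp only [IsHomogeneous, IsWeightedHomogeneous, Finsupp.degree_eq_weight_one]
  exact ⟨fun h _ hd => h hd, fun h _ hd => h _ hd⟩

lemma IsHomogeneous.degree_eq {f : MvPowerSeries σ R} {p : ℕ} (hf : f.IsHomogeneous p)
    {d : σ →₀ ℕ} (hd : coeff d f ≠ 0) : d.degree = p :=
  isHomogeneous_iff_degree.mp hf d hd

variable [DecidableEq σ]

lemma mem_finsuppAntidiag_iff_degree {s : Finset σ} {n : ℕ} {d : σ →₀ ℕ} :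
    d ∈ s.finsuppAntidiag n ↔ d.degree = n ∧ d.support ⊆ s :=
  Finset.mem_finsuppAntidiag'

/-- The degree `n` part of `f` evaluated at `x_i = 1` for `i ∈ s` and `x_i = 0` otherwise. -/
def evalOnes (s : Finset σ) (n : ℕ) : MvPowerSeries σ R →ₗ[R] R :=
  ∑ d ∈ s.finsuppAntidiag n, coeff d

lemma evalOnes_apply (s : Finset σ) (n : ℕ) (f : MvPowerSeries σ R) :
    evalOnes s n f = ∑ d ∈ s.finsuppAntidiag n, coeff d f :=
  LinearMap.sum_apply ..

lemma evalOnes_one (s : Finset σ) : evalOnes s 0 (1 : MvPowerSeries σ R) = 1 := by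
  simp [evalOnes_apply]

lemma isHomogeneous_one : (1 : MvPowerSeries σ R).IsHomogeneous 0 :=
  isHomogeneous_iff_degree.mpr fun d hd => by
    rw [coeff_one] at hd
    simp_all

lemma evalOnes_mul {s : Finset σ} {p q : ℕ} {f g : MvPowerSeries σ R}
    (hf : f.IsHomogeneous p) (hg : g.IsHomogeneous q) :
    evalOnes s (p + q) (f * g) = evalOnes s p f * evalOnes s q g := by
  have hdisj :
      (s.finsuppAntidiag (p + q) : Set (σ →₀ ℕ)).PairwiseDisjoint antidiagonal := by
    intro d _ d' _ hne
    refine Finset.disjoint_left.mpr fun x hx hx' => hne ?_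
    rw [HasAntidiagonal.mem_antidiagonal] at hx hx'
    rw [← hx, ← hx']
  have hsub : s.finsuppAntidiag p ×ˢ s.finsuppAntidiag q ⊆
      (s.finsuppAntidiag (p + q)).biUnion antidiagonal := by
    intro x hx
    simp only [Finset.mem_product, mem_finsuppAntidiag_iff_degree] at hx
    refine Finset.mem_biUnion.mpr ⟨x.1 + x.2, ?_, HasAntidiagonal.mem_antidiagonal.mpr rfl⟩
    rw [mem_finsuppAntidiag_iff_degree, map_add, hx.1.1, hx.2.1]
    exact ⟨rfl, Finsupp.support_add.trans (Finset.union_subset hx.1.2 hx.2.2)⟩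
  -- by homogeneity only pairs of degrees `p` and `q` contribute
  have hzero : ∀ x ∈ (s.finsuppAntidiag (p + q)).biUnion antidiagonal,
      x ∉ s.finsuppAntidiag p ×ˢ s.finsuppAntidiag q → coeff x.1 f * coeff x.2 g = 0 := by
    intro x hx hxn
    obtain ⟨d, hd, hxd⟩ := Finset.mem_biUnion.mp hx
    rw [HasAntidiagonal.mem_antidiagonal] at hxd
    rw [mem_finsuppAntidiag_iff_degree, ← hxd] at hd
    by_contra hne
    refine hxn (Finset.mem_product.mpr ⟨?_, ?_⟩) <;> rw [mem_finsuppAntidiag_iff_degree]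
    · exact ⟨hf.degree_eq (left_ne_zero_of_mul hne),
        (Finsupp.support_mono le_self_add).trans hd.2⟩
    · exact ⟨hg.degree_eq (right_ne_zero_of_mul hne),
        (Finsupp.support_mono le_add_self).trans hd.2⟩
  simp only [evalOnes_apply, coeff_mul]
  rw [← Finset.sum_biUnion hdisj, ← Finset.sum_subset hsub hzero, Finset.sum_mul_sum,
    Finset.sum_product]

lemma isHomogeneous_multiset_prod {μ : Multiset ℕ} {F : ℕ → MvPowerSeries σ R}
    (hF : ∀ m ∈ μ, (F m).IsHomogeneous m) : ((μ.map F).prod).IsHomogeneous μ.sum := by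
  induction μ using Multiset.induction_on with
  | empty => exact isHomogeneous_one
  | cons m μ ih =>
    rw [Multiset.map_cons, Multiset.prod_cons, Multiset.sum_cons]
    exact IsHomogeneous.mul (hF m (Multiset.mem_cons_self m μ))
      (ih fun x hx => hF x (Multiset.mem_cons_of_mem hx))

lemma evalOnes_multiset_prod (s : Finset σ) {μ : Multiset ℕ} {F : ℕ → MvPowerSeries σ R}
    (hF : ∀ m ∈ μ, (F m).IsHomogeneous m) :
    evalOnes s μ.sum (μ.map F).prod = (μ.map fun m => evalOnes s m (F m)).prod := by
  induction μ using Multiset.induction_on with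
  | empty => simpa using evalOnes_one s
  | cons m μ ih =>
    have hμ : ∀ x ∈ μ, (F x).IsHomogeneous x := fun x hx => hF x (Multiset.mem_cons_of_mem hx)
    rw [Multiset.map_cons, Multiset.prod_cons, Multiset.sum_cons,
      evalOnes_mul (hF m (Multiset.mem_cons_self m μ)) (isHomogeneous_multiset_prod hμ), ih hμ,
      Multiset.map_cons, Multiset.prod_cons]

end MvPowerSeries

lemma Nat.card_subtype_prod_ne_and {α β : Type*} [Fintype α] [Fintype β] (f : β → α)
    (P : β → Prop) :
    Nat.card {p : α × β // p.1 ≠ f p.2 ∧ P p.2} = Nat.card {b // P b} * (Nat.card α - 1) := by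
  classical
  simp only [Nat.card_eq_fintype_card, Fintype.card_subtype, ← univ_product_univ,
    sum_product_right, card_eq_sum_ones, sum_filter, sum_mul]
  refine sum_congr rfl fun b _ => ?_
  by_cases hb : P b
  · simp [hb, sum_ite, filter_ne']
  · simp [hb]

namespace SimpleGraph

def numColorings {V : Type} (G : SimpleGraph V) (k : ℕ) : ℕ :=
  Nat.card {c : V → Fin k // ∀ u v, G.Adj u v → c u ≠ c v}

lemma numColorings_eq_of_leaf {V : Type} [Fintype V] (G : SimpleGraph V) {v u : V}
    (hu : ∀ w, G.Adj v w ↔ w = u) (k : ℕ) :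
    G.numColorings k = (G.induce {v}ᶜ).numColorings k * (k - 1) := by
  have huv : u ∈ ({v}ᶜ : Set V) := (G.ne_of_adj ((hu u).mpr rfl)).symm
  let e : (V → Fin k) ≃ Fin k × (({v}ᶜ : Set V) → Fin k) :=
    { toFun := fun c => (c v, fun w => c w)
      invFun := fun p w => if h : w = v then p.1 else p.2 ⟨w, h⟩
      left_inv := fun c => funext fun w => by by_cases h : w = v <;> simp [h]
      right_inv := fun p => Prod.ext (dif_pos rfl) (funext fun w => dif_neg w.2) }
  let P : (({v}ᶜ : Set V) → Fin k) → Prop := fun c =>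
    ∀ x y, (G.induce {v}ᶜ).Adj x y → c x ≠ c y
  -- a proper colouring of `G` is a proper colouring of `G - v` together with a colour of `v`
  -- different from that of `u`
  have hproper : ∀ c : V → Fin k,
      (∀ x y, G.Adj x y → c x ≠ c y) ↔ (e c).1 ≠ (e c).2 ⟨u, huv⟩ ∧ P (e c).2 := by
    intro c
    refine ⟨fun h => ⟨h v u ((hu u).mpr rfl), fun x y hxy => h x y hxy⟩, ?_⟩
    rintro ⟨hvu, hrest⟩ x y hxy
    by_cases hx : x = v
    · subst hx
      rwa [(hu y).mp hxy]
    by_cases hy : y = v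
    · subst hy
      rw [(hu x).mp hxy.symm]
      exact hvu.symm
    exact hrest ⟨x, hx⟩ ⟨y, hy⟩ hxy
  rw [numColorings, numColorings,
    Nat.card_congr (e.subtypeEquiv (q := fun p => p.1 ≠ p.2 ⟨u, huv⟩ ∧ P p.2) hproper)]
  refine (Nat.card_subtype_prod_ne_and (fun c => c ⟨u, huv⟩) P).trans ?_
  rw [Nat.card_eq_fintype_card (α := Fin k), Fintype.card_fin]

lemma numColorings_of_subsingleton {V : Type} [Finite V] [Subsingleton V] (G : SimpleGraph V)
    (k : ℕ) : G.numColorings k = k ^ Nat.card V := by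
  have hproper : ∀ c : V → Fin k, ∀ x y, G.Adj x y → c x ≠ c y := fun _ x y hxy =>
    absurd (Subsingleton.elim x y) (G.ne_of_adj hxy)
  rw [numColorings, Nat.card_congr (Equiv.subtypeUnivEquiv hproper), Nat.card_fun,
    Nat.card_eq_fintype_card, Fintype.card_fin]

theorem IsTree.numColorings_eq {V : Type} [Finite V] {G : SimpleGraph V} (hG : G.IsTree)
    (k : ℕ) : G.numColorings k = k * (k - 1) ^ (Nat.card V - 1) := by
  induction V using Finite.induction_subsingleton_or_nontrivial with
  | hbase V =>
    have hcard : Nat.card V = 1 :=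
      Nat.card_eq_one_iff_unique.mpr ⟨inferInstance, hG.connected.nonempty⟩
    rw [numColorings_of_subsingleton, hcard, pow_one, Nat.sub_self, pow_zero, mul_one]
  | hstep V ih =>
    have := Fintype.ofFinite V
    obtain ⟨v, hv⟩ := hG.exists_vert_degree_one_of_nontrivial
    obtain ⟨u, hvu, huniq⟩ := degree_eq_one_iff_existsUnique_adj.mp hv
    have hdel : (G.induce {v}ᶜ).IsTree :=
      ⟨hG.connected.induce_compl_singleton_of_degree_eq_one hv, hG.isAcyclic.induce _⟩
    have hcard : Nat.card ({v}ᶜ : Set V) = Nat.card V - 1 := by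
      rw [Nat.card_coe_set_eq, Set.ncard_compl, Set.ncard_singleton]
    have htwo : 2 ≤ Nat.card V := Finite.one_lt_card
    rw [numColorings_eq_of_leaf G (fun w => ⟨huniq w, fun h => h ▸ hvu⟩) k,
      ih _ (hcard ▸ Nat.sub_lt (by omega) one_pos) hdel, hcard, mul_assoc, ← pow_succ,
      Nat.sub_add_cancel (by omega)]

lemma card_edgeSet_pathGraph (n : ℕ) : Nat.card (pathGraph (n + 1)).edgeSet = n := by
  let f : Fin n → (pathGraph (n + 1)).edgeSet := fun i =>
    ⟨s(i.castSucc, i.succ), by simp [pathGraph_adj]⟩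
  have hf : Function.Bijective f := by
    constructor
    · intro i j hij
      have := congrArg Subtype.val hij
      simp only [f, Sym2.eq_iff, Fin.ext_iff, Fin.val_castSucc, Fin.val_succ] at this
      omega
    · rintro ⟨e, he⟩
      induction e using Sym2.ind with
      | h a b =>
        rw [mem_edgeSet, pathGraph_adj] at he
        rcases he with h | h
        · refine ⟨⟨a, by omega⟩, Subtype.ext ?_⟩
          simp only [f, Sym2.eq_iff, Fin.ext_iff, Fin.val_castSucc, Fin.val_succ, true_and]
          omega
        · refine ⟨⟨b, by omega⟩, Subtype.ext ?_⟩
          simp only [f, Sym2.eq_iff, Fin.ext_iff, Fin.val_castSucc, Fin.val_succ, true_and]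
          omega
  rw [← Nat.card_congr (Equiv.ofBijective f hf), Nat.card_eq_fintype_card, Fintype.card_fin]

lemma pathGraph_isTree (n : ℕ) (hn : 0 < n) : (pathGraph n).IsTree := by
  obtain ⟨m, rfl⟩ := Nat.exists_eq_add_of_lt hn
  rw [isTree_iff_connected_and_card, zero_add, card_edgeSet_pathGraph, Nat.card_eq_fintype_card,
    Fintype.card_fin]
  exact ⟨pathGraph_connected m, rfl⟩

section Weights

variable {V : Type} [Fintype V]

/-- The exponent vector of the monomial `∏ v, x_(κ v) ^ (ω v)` of a colouring `κ`. -/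
def colorWeight (ω : V → ℕ) (κ : V → ℕ) : ℕ →₀ ℕ :=
  ∑ v, Finsupp.single (κ v) (ω v)

variable {ω : V → ℕ}

lemma colorWeight_apply (κ : V → ℕ) (i : ℕ) :
    colorWeight ω κ i = ∑ v ∈ univ.filter (fun v => κ v = i), ω v := by
  simp [colorWeight, Finsupp.finsetSum_apply, Finsupp.single_apply, Finset.sum_filter, eq_comm]

lemma degree_colorWeight (κ : V → ℕ) : (colorWeight ω κ).degree = ∑ v, ω v := by
  simp [colorWeight, map_sum]

lemma support_colorWeight (hω : ∀ v, 0 < ω v) (κ : V → ℕ) :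
    (colorWeight ω κ).support = univ.image κ := by
  ext i
  simp only [Finsupp.mem_support_iff, colorWeight_apply, Finset.mem_image, Finset.mem_univ,
    true_and, ne_eq, Finset.sum_eq_zero_iff, Finset.mem_filter, not_forall]
  exact ⟨fun ⟨v, hv, _⟩ => ⟨v, hv⟩, fun ⟨v, hv⟩ => ⟨v, hv, (hω v).ne'⟩⟩

lemma colorWeight_mem_finsuppAntidiag_iff (hω : ∀ v, 0 < ω v) (κ : V → ℕ) (k : ℕ) :
    colorWeight ω κ ∈ (range k).finsuppAntidiag (∑ v, ω v) ↔ ∀ v, κ v < k := by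
  rw [MvPowerSeries.mem_finsuppAntidiag_iff_degree, degree_colorWeight, support_colorWeight hω]
  simp [Finset.image_subset_iff]

lemma coeff_wcsf (G : SimpleGraph V) (ω : V → ℕ) (d : ℕ →₀ ℕ) :
    MvPowerSeries.coeff d (wcsf G ω) =
      Nat.card {κ : V → ℕ // (∀ u v, G.Adj u v → κ u ≠ κ v) ∧ colorWeight ω κ = d} := by
  refine congrArg Nat.cast (Nat.card_congr (Equiv.subtypeEquivRight fun κ => ?_))
  simp only [Finsupp.ext_iff, colorWeight_apply]

lemma isHomogeneous_wcsf (G : SimpleGraph V) (ω : V → ℕ) :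
    (wcsf G ω).IsHomogeneous (∑ v, ω v) := by
  refine MvPowerSeries.isHomogeneous_iff_degree.mpr fun d hd => ?_
  rw [coeff_wcsf, Nat.cast_ne_zero, Nat.card_ne_zero] at hd
  obtain ⟨⟨κ, -, rfl⟩⟩ := hd.1
  exact degree_colorWeight κ

lemma evalOnes_wcsf (G : SimpleGraph V) (hω : ∀ v, 0 < ω v) (k : ℕ) :
    MvPowerSeries.evalOnes (range k) (∑ v, ω v) (wcsf G ω) = G.numColorings k := by
  rw [MvPowerSeries.evalOnes_apply]
  -- a colouring whose weight monomial only involves `x_0, …, x_{k-1}` takes values in `Fin k`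
  have hfiber : ∀ d ∈ (range k).finsuppAntidiag (∑ v, ω v),
      Nat.card {κ : V → ℕ // (∀ u v, G.Adj u v → κ u ≠ κ v) ∧ colorWeight ω κ = d} =
      #{c : V → Fin k | (∀ u v, G.Adj u v → c u ≠ c v) ∧
        colorWeight ω (fun v => (c v : ℕ)) = d} := by
    intro d hd
    have hlt : ∀ κ : V → ℕ, colorWeight ω κ = d → ∀ v, κ v < k := fun κ hκ =>
      (colorWeight_mem_finsuppAntidiag_iff hω κ k).mp (hκ ▸ hd)
    rw [← Fintype.card_subtype, ← Nat.card_eq_fintype_card]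
    exact Nat.card_congr
      { toFun := fun κ => ⟨fun v => ⟨κ.1 v, hlt κ.1 κ.2.2 v⟩,
          fun u v huv h => κ.2.1 u v huv (Fin.val_eq_of_eq h), κ.2.2⟩
        invFun := fun c => ⟨fun v => c.1 v,
          fun u v huv h => c.2.1 u v huv (Fin.ext h), c.2.2⟩
        left_inv := fun _ => rfl
        right_inv := fun _ => rfl }
  simp only [coeff_wcsf]
  rw [← Nat.cast_sum, Finset.sum_congr rfl hfiber, numColorings, Nat.card_eq_fintype_card,
    Fintype.card_subtype, Finset.card_eq_sum_card_fiberwise (t := (range k).finsuppAntidiag _)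
      fun c _ => (colorWeight_mem_finsuppAntidiag_iff hω _ k).mpr fun v => (c v).isLt]
  simp only [Finset.filter_filter]

end Weights

end SimpleGraph

lemma Nat.Partition.card_parts_le {n : ℕ} (l : n.Partition) : l.parts.card ≤ n := by
  simpa [l.parts_sum] using Multiset.card_nsmul_le_sum (a := 1) fun _ hm => l.parts_pos hm

lemma Multiset.prod_map_mul_pow_sub_one {M : Type*} [CommMonoid M] (x y : M) {μ : Multiset ℕ}
    (hμ : ∀ m ∈ μ, 0 < m) :
    (μ.map fun m => x * y ^ (m - 1)).prod = x ^ card μ * y ^ (μ.sum - card μ) := by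
  induction μ using Multiset.induction_on with
  | empty => simp
  | cons m μ ih =>
    have hm := hμ m (mem_cons_self m μ)
    have hμ' : ∀ x ∈ μ, 0 < x := fun x hx => hμ x (mem_cons_of_mem hx)
    have hle : card μ ≤ μ.sum := by simpa using card_nsmul_le_sum (a := 1) hμ'
    rw [map_cons, prod_cons, ih hμ', card_cons, sum_cons, pow_succ,
      show m + μ.sum - (card μ + 1) = (m - 1) + (μ.sum - card μ) by omega, pow_add]
    ac_rfl

lemma isHomogeneous_csf {W : Type} [Fintype W] (G : SimpleGraph W) {n : ℕ}
    (hn : Fintype.card W = n) : (csf G).IsHomogeneous n := by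
  rw [← hn, Fintype.card_eq_sum_ones]
  exact G.isHomogeneous_wcsf _

lemma evalOnes_csf {W : Type} [Fintype W] (G : SimpleGraph W) {n : ℕ}
    (hn : Fintype.card W = n) (k : ℕ) :
    MvPowerSeries.evalOnes (range k) n (csf G) = G.numColorings k := by
  rw [← hn, Fintype.card_eq_sum_ones]
  exact G.evalOnes_wcsf (fun _ => one_pos) k

/-- Both sides count the proper `k`-colourings of the forest `T_λ`. -/
lemma evalOnes_prod_csf_of_isTree (T : (n : ℕ) → SimpleGraph (Fin n))
    (hT : ∀ n, 0 < n → (T n).IsTree) {n : ℕ} (l : n.Partition) (k : ℕ) :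
    MvPowerSeries.evalOnes (range k) n (l.parts.map fun m => csf (T m)).prod =
      ((k ^ l.parts.card * (k - 1) ^ (n - l.parts.card) : ℕ) : ℚ) := by
  have hhom : ∀ m ∈ l.parts, (csf (T m)).IsHomogeneous m := fun m _ =>
    isHomogeneous_csf (T m) (Fintype.card_fin m)
  have hcount : ∀ m ∈ l.parts, MvPowerSeries.evalOnes (range k) m (csf (T m)) =
      ((k * (k - 1) ^ (m - 1) : ℕ) : ℚ) := fun m hm => by
    simpa [(hT m (l.parts_pos hm)).numColorings_eq k] using
      evalOnes_csf (T m) (Fintype.card_fin m) k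
  have hprod := MvPowerSeries.evalOnes_multiset_prod (range k) hhom
  rw [l.parts_sum] at hprod
  have hcast := Multiset.prod_map_mul_pow_sub_one k (k - 1) fun m hm => l.parts_pos hm
  rw [l.parts_sum] at hcast
  rw [hprod, Multiset.map_congr rfl hcount, ← hcast, Nat.cast_multiset_prod, Multiset.map_map]
  rfl

lemma evalOnes_sum_smul_prod_csf_of_isTree (T : (n : ℕ) → SimpleGraph (Fin n))
    (hT : ∀ n, 0 < n → (T n).IsTree) {n : ℕ} (a : n.Partition → ℚ) (k : ℕ) :
    MvPowerSeries.evalOnes (range k) n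
        (∑ l : n.Partition, a l • (l.parts.map fun m => csf (T m)).prod) =
      ∑ l : n.Partition, a l * ((k ^ l.parts.card * (k - 1) ^ (n - l.parts.card) : ℕ) : ℚ) := by
  simp only [map_sum, map_smul, evalOnes_prod_csf_of_isTree T hT, smul_eq_mul]

lemma coeff_basisPoly {n : ℕ} (a : n.Partition → ℚ) (j : ℕ) :
    (basisPoly n a).coeff j =
      ∑ l ∈ univ.filter (fun l : n.Partition => l.parts.card = j), a l := by
  simp [basisPoly, coeff_X_pow, Finset.sum_filter, eq_comm]

/-- The tree polynomial and the chromatic polynomial are related by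
`χ(x) = (x - 1)^n τ(x / (x - 1))`. -/
lemma pow_mul_eval_basisPoly {n : ℕ} (a : n.Partition → ℚ) {y z : ℚ} (hz : z ≠ 0) :
    z ^ n * (basisPoly n a).eval (y / z) =
      ∑ l : n.Partition, a l * (y ^ l.parts.card * z ^ (n - l.parts.card)) := by
  simp only [basisPoly, eval_finsetSum, eval_mul, eval_C, eval_pow, eval_X, Finset.mul_sum]
  refine Finset.sum_congr rfl fun l _ => ?_
  rw [← pow_sub_mul_pow z l.card_parts_le, div_pow]
  field_simp

lemma basisPoly_eq_of_forall_sum_eq {n : ℕ} {a b : n.Partition → ℚ}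
    (h : ∀ k : ℕ,
      ∑ l : n.Partition, a l * ((k ^ l.parts.card * (k - 1) ^ (n - l.parts.card) : ℕ) : ℚ) =
        ∑ l : n.Partition, b l * ((k ^ l.parts.card * (k - 1) ^ (n - l.parts.card) : ℕ) : ℚ)) :
    basisPoly n a = basisPoly n b := by
  refine eq_of_infinite_eval_eq _ _ (Set.infinite_of_injective_forall_mem
    (f := fun j : ℕ => ((j : ℚ) + 2) / (j + 1)) (fun i j hij => ?_) fun j => ?_)
  · have hi : (i : ℚ) + 1 ≠ 0 := by positivity
    have hj : (j : ℚ) + 1 ≠ 0 := by positivity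
    field_simp at hij
    exact_mod_cast (by linarith : (i : ℚ) = j)
  · have hj : (j : ℚ) + 1 ≠ 0 := by positivity
    have := h (j + 2)
    push_cast [show j + 2 - 1 = j + 1 by omega] at this
    refine mul_left_cancel₀ (pow_ne_zero n hj) ?_
    rwa [pow_mul_eval_basisPoly a hj, pow_mul_eval_basisPoly b hj]

theorem stmt_9_general (T : (n : ℕ) → SimpleGraph (Fin n)) (hT : ∀ n, 0 < n → (T n).IsTree)
    {V : Type} [Fintype V] (G : SimpleGraph V) (ω : V → ℕ)
    (N : ℕ)
    (a b : N.Partition → ℚ)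
    (ha : wcsf G ω = ∑ l : N.Partition, a l • (l.parts.map (fun m => csf (T m))).prod)
    (hb : wcsf G ω = ∑ l : N.Partition, b l • XP l.parts) :
    ∀ k : ℕ, ∑ l ∈ Finset.univ.filter (fun l : N.Partition => l.parts.card = k), a l =
      ∑ l ∈ Finset.univ.filter (fun l : N.Partition => l.parts.card = k), b l := by
  have hcount := fun k => congrArg (MvPowerSeries.evalOnes (range k) N) (ha.symm.trans hb)
  simp only [XP, evalOnes_sum_smul_prod_csf_of_isTree T hT,
    evalOnes_sum_smul_prod_csf_of_isTree _ SimpleGraph.pathGraph_isTree] at hcount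
  intro k
  rw [← coeff_basisPoly, ← coeff_basisPoly, basisPoly_eq_of_forall_sum_eq hcount]

/-- let `{T_n}` be any family of trees with `T_n` having `n` vertices and let
`X_{T_λ}` be the corresponding tree basis.  For any vertex-weighted graph `(G,ω)` of total
weight `N`, expanding `X_{(G,ω)}` in the tree basis and in the path basis, for every `k` the
sum of coefficients over partitions of length `k` is the same; i.e. the tree polynomial is
independent of the choice of tree basis. -/
theorem stmt_9 (T : (n : ℕ) → SimpleGraph (Fin n)) (hT : ∀ n, 0 < n → (T n).IsTree)
    {V : Type} [Fintype V] (G : SimpleGraph V) (ω : V → ℕ) (hω : ∀ v, 0 < ω v)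
    (N : ℕ) (hN : ∑ v, ω v = N)
    (a b : N.Partition → ℚ)
    (ha : wcsf G ω = ∑ l : N.Partition, a l • (l.parts.map (fun m => csf (T m))).prod)
    (hb : wcsf G ω = ∑ l : N.Partition, b l • XP l.parts) :
    ∀ k : ℕ, ∑ l ∈ Finset.univ.filter (fun l : N.Partition => l.parts.card = k), a l =
      ∑ l ∈ Finset.univ.filter (fun l : N.Partition => l.parts.card = k), b l :=
  stmt_9_general T hT G ω N a b ha hb
end
end

section
/- For any graph G with n vertices, the sum over all partitions λ of n of the coefficients of X_G in the path basis equals 1: Σ_{λ⊢n} [X_{P_λ}]X_G = 1. Equivalently, τ_G(1) = 1. -/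
/-!
Compare the coefficients of the squarefree monomial `x₀ x₁ ⋯ x_{n-1}` on both sides. A colouring
with these fibre sizes is a bijection onto `{0, …, n-1}`, hence automatically proper, so this
coefficient of `X_G` is `n!`. The squarefree parts of power series multiply like exponential
generating functions: `(m! e_m) (k! e_k)` has squarefree part
`C(m+k, m) m! k! e_{m+k} = (m+k)! e_{m+k}`.
So every `X_{P_μ}` also has coefficient `n!` there, and `n! = n! Σ_λ a_λ`.
-/

open Polynomial

noncomputable section
open scoped Classical

open Function Finset
open scoped Nat

def injectiveRangeEqEquiv {α β : Type*} (s : Set β) :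
    {f : α → β // Injective f ∧ Set.range f = s} ≃ (α ≃ s) where
  toFun f := Equiv.ofBijective (fun a => ⟨f.1 a, f.2.2.subset (Set.mem_range_self a)⟩)
    ⟨fun _ _ h => f.2.1 (congrArg Subtype.val h), by
      rintro ⟨b, hb⟩
      obtain ⟨a, rfl⟩ := f.2.2.symm.subset hb
      exact ⟨a, rfl⟩⟩
  invFun e := ⟨Subtype.val ∘ e, Subtype.val_injective.comp e.injective, by
    rw [Set.range_comp, e.range_eq_univ, Set.image_univ, Subtype.range_coe]⟩
  left_inv _ := rfl
  right_inv _ := Equiv.ext fun _ => rfl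

lemma forall_card_fiber_eq_iff {V : Type*} [Fintype V] (κ : V → ℕ) {d : ℕ →₀ ℕ}
    (hd : ∀ i, d i ≤ 1) :
    (∀ i, #{v | κ v = i} = d i) ↔ Injective κ ∧ Set.range κ = d.support := by
  have hfiber : ∀ i, #{v | κ v = i} = d i ↔
      #{v | κ v = i} ≤ 1 ∧ (0 < #{v | κ v = i} ↔ d i ≠ 0) := fun i => by
    have := hd i
    omega
  have hinj : (∀ i, #{v | κ v = i} ≤ 1) ↔ Injective κ := by
    simp only [card_le_one, mem_filter, mem_univ, true_and]
    exact ⟨fun h u v huv => h _ u huv v rfl, fun h i u hu v hv => h (hu.trans hv.symm)⟩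
  have hrange : (∀ i, (0 < #{v | κ v = i} ↔ d i ≠ 0)) ↔ Set.range κ = d.support := by
    simp only [Set.ext_iff, card_pos, filter_nonempty_iff, mem_univ, true_and, Set.mem_range,
      mem_coe, Finsupp.mem_support_iff]
  simp only [hfiber, forall_and, hinj, hrange]

-- The squarefree part of `F` is `m! • e_m`.
def SqfreePartIsFactorialElem {σ R : Type*} [Semiring R] (F : MvPowerSeries σ R) (m : ℕ) :
    Prop :=
  ∀ d : σ →₀ ℕ, (∀ i, d i ≤ 1) →
    MvPowerSeries.coeff d F = if #d.support = m then (m ! : R) else 0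

theorem sqfreePartIsFactorialElem_csf {V : Type} [Fintype V] (G : SimpleGraph V) :
    SqfreePartIsFactorialElem (csf G) (Fintype.card V) := by
  intro d hd
  have hcolourings : {κ : V → ℕ // (∀ u v, G.Adj u v → κ u ≠ κ v) ∧
      ∀ i, ∑ v ∈ univ.filter (fun v => κ v = i), 1 = d i} ≃ (V ≃ (d.support : Set ℕ)) :=
    (Equiv.subtypeEquivRight fun κ => by
      simp only [← card_eq_sum_ones, forall_card_fiber_eq_iff κ hd, and_iff_right_iff_imp]
      exact fun hκ u v huv h => G.ne_of_adj huv (hκ.1 h)).trans (injectiveRangeEqEquiv _)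
  rw [MvPowerSeries.coeff_apply, csf, wcsf, Nat.card_congr hcolourings,
    Nat.card_eq_fintype_card]
  split_ifs with hcard
  · rw [Fintype.card_equiv (Fintype.equivOfCardEq (by simp [hcard]))]
  · have : IsEmpty (V ≃ (d.support : Set ℕ)) :=
      ⟨fun e => hcard (by simpa using (Fintype.card_congr e).symm)⟩
    simp

lemma Finsupp.sum_antidiagonal_of_le_one {σ M : Type*} [AddCommMonoid M] {d : σ →₀ ℕ}
    (hd : ∀ i, d i ≤ 1) (f : (σ →₀ ℕ) × (σ →₀ ℕ) → M) :
    ∑ p ∈ antidiagonal d, f p =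
      ∑ s ∈ d.support.powerset, f (d.filter (· ∈ s), d.filter (· ∉ s)) := by
  have hsplit : ∀ p ∈ antidiagonal d,
      (d.filter (· ∈ p.1.support), d.filter (· ∉ p.1.support)) = p := by
    rintro ⟨p₁, p₂⟩ hp
    rw [HasAntidiagonal.mem_antidiagonal] at hp
    ext i <;> have := hd i <;> simp only [← hp, Finsupp.filter_apply, Finsupp.mem_support_iff,
      Finsupp.add_apply] at this ⊢ <;> split_ifs <;> omega
  refine sum_nbij' (fun p => p.1.support) (fun s => (d.filter (· ∈ s), d.filter (· ∉ s)))
    ?_ ?_ (fun p hp => hsplit p hp) ?_ (fun p hp => by rw [hsplit p hp])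
  · rintro ⟨p₁, p₂⟩ hp
    rw [HasAntidiagonal.mem_antidiagonal] at hp
    simpa [← hp] using Finsupp.support_mono (le_self_add : p₁ ≤ p₁ + p₂)
  · intro s _
    simp [Finsupp.filter_add_filter_not]
  · intro s hs
    simp only [mem_powerset] at hs
    simp [Finsupp.support_filter, filter_mem_eq_inter, inter_eq_right.mpr hs]

theorem SqfreePartIsFactorialElem.mul {σ R : Type*} [CommSemiring R] {F H : MvPowerSeries σ R}
    {m k : ℕ} (hF : SqfreePartIsFactorialElem F m) (hH : SqfreePartIsFactorialElem H k) :
    SqfreePartIsFactorialElem (F * H) (m + k) := by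
  intro d hd
  have hterm : ∀ s ∈ d.support.powerset,
      MvPowerSeries.coeff (d.filter (· ∈ s)) F * MvPowerSeries.coeff (d.filter (· ∉ s)) H =
        if #s = m then (if #d.support = m + k then (m ! * k ! : R) else 0) else 0 := by
    intro s hs
    rw [mem_powerset] at hs
    have hle : ∀ (p : σ → Prop) [DecidablePred p] i, d.filter p i ≤ 1 := fun p _ i => by
      rw [Finsupp.filter_apply]; split_ifs <;> simp [hd i]
    rw [hF _ (hle _), hH _ (hle _), Finsupp.support_filter, Finsupp.support_filter,
      filter_mem_eq_inter, inter_eq_right.mpr hs, filter_notMem_eq_sdiff,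
      card_sdiff_of_subset hs]
    have := card_le_card hs
    split_ifs <;> first | rfl | omega | simp
  rw [MvPowerSeries.coeff_mul, Finsupp.sum_antidiagonal_of_le_one hd, sum_congr rfl hterm,
    ← sum_filter, ← powersetCard_eq_filter, sum_const, card_powersetCard]
  split_ifs with hcard
  · rw [hcard, nsmul_eq_mul, Nat.choose_symm_add,
      ← Nat.add_choose_mul_factorial_mul_factorial]
    push_cast
    ring
  · simp

theorem SqfreePartIsFactorialElem.one {σ R : Type*} [Semiring R] :
    SqfreePartIsFactorialElem (1 : MvPowerSeries σ R) 0 := by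
  intro d _
  simp [MvPowerSeries.coeff_one]

theorem sqfreePartIsFactorialElem_XP (μ : Multiset ℕ) :
    SqfreePartIsFactorialElem (XP μ) μ.sum := by
  induction μ using Multiset.induction_on with
  | empty => exact .one
  | cons m μ ih =>
    have hXP : XP (m ::ₘ μ) = csf (SimpleGraph.pathGraph m) * XP μ := by
      rw [XP, XP, Multiset.map_cons, Multiset.prod_cons]
    rw [hXP, Multiset.sum_cons]
    simpa only [Fintype.card_fin] using
      (sqfreePartIsFactorialElem_csf (SimpleGraph.pathGraph m)).mul ih

/-- for any graph `G` on `n` vertices, the sum over all partitions `λ ⊢ n` of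
the path-basis coefficients of `X_G` equals `1`; equivalently `τ_G(1) = 1`. -/
theorem stmt_11 {V : Type} [Fintype V] (G : SimpleGraph V) (n : ℕ)
    (hn : Fintype.card V = n) (a : n.Partition → ℚ)
    (ha : csf G = ∑ l : n.Partition, a l • XP l.parts) :
    ∑ l : n.Partition, a l = 1 := by
  obtain ⟨d, hd, hcard⟩ : ∃ d : ℕ →₀ ℕ, (∀ i, d i ≤ 1) ∧ #d.support = n :=
    ⟨Multiset.toFinsupp (range n).val, Multiset.nodup_iff_count_le_one.1 (range n).nodup,
      by simp [Multiset.toFinsupp_support]⟩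
  have hcoeff := congrArg (MvPowerSeries.coeff d) ha
  simp only [map_sum, map_smul, smul_eq_mul, sqfreePartIsFactorialElem_csf G d hd,
    fun l : n.Partition => sqfreePartIsFactorialElem_XP l.parts d hd, Nat.Partition.parts_sum,
    hn, hcard] at hcoeff
  rw [← sum_mul] at hcoeff
  simpa [Nat.factorial_ne_zero] using hcoeff.symm
end
end

section
/- Let {G_i} be any family of connected graphs with G_i having i vertices, and let G be any graph with n vertices. Then the sum over all partitions λ of n of the coefficients of X_G in the chromatic basis {X_{G_λ}} equals 1: Σ_{λ⊢n} [X_{G_λ}]X_G = 1. -/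
open Polynomial

noncomputable section
open scoped Classical

/-!
Compare the coefficients of the squarefree monomial `x₀ x₁ ⋯ x_{n-1}` on both sides.
A colouring of a graph on `m` vertices that uses each colour of an `m`-set exactly once is a
bijection onto that set, hence automatically proper, so the coefficient of every squarefree
monomial of degree `m` in `X_G` is `m!`, just as in `p₁ᵐ = (x₀ + x₁ + ⋯)ᵐ`. This property
is multiplicative (degrees add), so every `X_{G_λ}` with `λ ⊢ n` also has coefficient `n!` there,
and `X_G = Σ a_λ X_{G_λ}` becomes `n! = n! Σ a_λ`.
-/

open Nat

def sqfreeMonomial (S : Finset ℕ) : ℕ →₀ ℕ := Finsupp.indicator S fun _ _ => 1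

lemma sqfreeMonomial_apply (S : Finset ℕ) (i : ℕ) :
    sqfreeMonomial S i = if i ∈ S then 1 else 0 := by
  simp [sqfreeMonomial, Finsupp.indicator_apply]

@[simp]
lemma support_sqfreeMonomial (S : Finset ℕ) : (sqfreeMonomial S).support = S := by
  ext i
  by_cases h : i ∈ S <;> simp [sqfreeMonomial_apply, h]

lemma sqfreeMonomial_eq_zero_iff {S : Finset ℕ} : sqfreeMonomial S = 0 ↔ S = ∅ := by
  rw [← Finsupp.support_eq_empty, support_sqfreeMonomial]

lemma sqfreeMonomial_add_sdiff {T S : Finset ℕ} (h : T ⊆ S) :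
    sqfreeMonomial T + sqfreeMonomial (S \ T) = sqfreeMonomial S := by
  ext i
  by_cases hT : i ∈ T <;> by_cases hS : i ∈ S <;>
    simp [sqfreeMonomial_apply, hT, hS]
  exact hS (h hT)

lemma eq_sqfreeMonomial_of_add_eq {d e : ℕ →₀ ℕ} {S : Finset ℕ}
    (h : d + e = sqfreeMonomial S) :
    d.support ⊆ S ∧ d = sqfreeMonomial d.support ∧ e = sqfreeMonomial (S \ d.support) := by
  have hi (i : ℕ) : d i + e i = if i ∈ S then 1 else 0 := by
    rw [← sqfreeMonomial_apply, ← h, Finsupp.add_apply]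
  refine ⟨fun i hd => ?_, Finsupp.ext fun i => ?_, Finsupp.ext fun i => ?_⟩
  all_goals
    have := hi i
    simp only [sqfreeMonomial_apply, Finset.mem_sdiff, Finsupp.mem_support_iff] at *
    grind

section

variable {R : Type*} [CommSemiring R]

lemma coeff_sqfreeMonomial_mul (f g : MvPowerSeries ℕ R) (S : Finset ℕ) :
    MvPowerSeries.coeff (sqfreeMonomial S) (f * g) =
      ∑ T ∈ S.powerset, MvPowerSeries.coeff (sqfreeMonomial T) f *
        MvPowerSeries.coeff (sqfreeMonomial (S \ T)) g := by
  rw [MvPowerSeries.coeff_mul]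
  refine Finset.sum_nbij' (fun p => p.1.support)
    (fun T => (sqfreeMonomial T, sqfreeMonomial (S \ T))) (fun p hp => ?_) (fun T hT => ?_)
    (fun p hp => ?_) (fun T _ => support_sqfreeMonomial T) (fun p hp => ?_)
  all_goals simp only [Finset.mem_powerset, Finset.HasAntidiagonal.mem_antidiagonal] at *
  · exact (eq_sqfreeMonomial_of_add_eq hp).1
  · exact sqfreeMonomial_add_sdiff hT
  · obtain ⟨-, h₁, h₂⟩ := eq_sqfreeMonomial_of_add_eq hp
    exact Prod.ext h₁.symm h₂.symm
  · obtain ⟨-, h₁, h₂⟩ := eq_sqfreeMonomial_of_add_eq hp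
    rw [← h₁, ← h₂]

/-- `f` has the squarefree coefficients of `p₁ ^ m = (x₀ + x₁ + ⋯) ^ m`. -/
def HasSqfreeCoeffsFactorial (m : ℕ) (f : MvPowerSeries ℕ R) : Prop :=
  ∀ S : Finset ℕ, MvPowerSeries.coeff (sqfreeMonomial S) f = if S.card = m then (m ! : R) else 0

lemma hasSqfreeCoeffsFactorial_one : HasSqfreeCoeffsFactorial 0 (1 : MvPowerSeries ℕ R) := by
  intro S
  simp [MvPowerSeries.coeff_one, sqfreeMonomial_eq_zero_iff]

lemma HasSqfreeCoeffsFactorial.mul {m k : ℕ} {f g : MvPowerSeries ℕ R}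
    (hf : HasSqfreeCoeffsFactorial m f) (hg : HasSqfreeCoeffsFactorial k g) :
    HasSqfreeCoeffsFactorial (m + k) (f * g) := by
  intro S
  calc MvPowerSeries.coeff (sqfreeMonomial S) (f * g)
      = ∑ T ∈ S.powerset, (if T.card = m then (m ! : R) else 0) *
          (if (S \ T).card = k then (k ! : R) else 0) := by
        rw [coeff_sqfreeMonomial_mul]
        exact Finset.sum_congr rfl fun T _ => by rw [hf, hg]
    _ = ∑ T ∈ S.powersetCard m, (m ! : R) * (if S.card = m + k then (k ! : R) else 0) := by
        rw [Finset.powersetCard_eq_filter, Finset.sum_filter]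
        refine Finset.sum_congr rfl fun T hT => ?_
        rw [Finset.card_sdiff_of_subset (Finset.mem_powerset.mp hT)]
        have := Finset.card_le_card (Finset.mem_powerset.mp hT)
        split_ifs <;> first | omega | simp
    _ = if S.card = m + k then ((m + k)! : R) else 0 := by
        rw [Finset.sum_const, Finset.card_powersetCard, nsmul_eq_mul]
        split_ifs with h
        · rw [h, ← Nat.add_choose_mul_factorial_mul_factorial, Nat.choose_symm_add]
          push_cast
          ring
        · simp

lemma HasSqfreeCoeffsFactorial.multiset_prod {F : ℕ → MvPowerSeries ℕ R} (μ : Multiset ℕ)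
    (h : ∀ m ∈ μ, HasSqfreeCoeffsFactorial m (F m)) :
    HasSqfreeCoeffsFactorial μ.sum (μ.map F).prod := by
  induction μ using Multiset.induction with
  | empty => exact hasSqfreeCoeffsFactorial_one
  | cons m μ ih =>
    rw [Multiset.map_cons, Multiset.prod_cons, Multiset.sum_cons]
    exact (h m (Multiset.mem_cons_self m μ)).mul
      (ih fun k hk => h k (Multiset.mem_cons_of_mem hk))

end

def injectiveRangeEquiv {α β : Type*} (s : Set β) :
    {κ : α → β // Function.Injective κ ∧ Set.range κ = s} ≃ (α ≃ s) where
  toFun κ := Equiv.ofBijective (fun a => ⟨κ.1 a, κ.2.2.subset (Set.mem_range_self a)⟩)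
    ⟨fun a b hab => κ.2.1 (congrArg Subtype.val hab), fun b => by
      obtain ⟨a, ha⟩ : (b : β) ∈ Set.range κ.1 := κ.2.2.symm.subset b.2
      exact ⟨a, Subtype.ext ha⟩⟩
  invFun e := ⟨Subtype.val ∘ e, Subtype.val_injective.comp e.injective, by
    rw [Set.range_comp, e.range_eq_univ, Set.image_univ, Subtype.range_coe]⟩
  left_inv _ := rfl
  right_inv _ := Equiv.ext fun _ => rfl

section

open scoped Finset

variable {V : Type} [Fintype V]

lemma card_fiber_eq_sqfreeMonomial_iff (κ : V → ℕ) (S : Finset ℕ) :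
    (∀ i, #{v | κ v = i} = sqfreeMonomial S i) ↔
      Function.Injective κ ∧ Set.range κ = S := by
  simp only [sqfreeMonomial_apply]
  constructor
  · intro h
    have hmem (v : V) : κ v ∈ S := by
      by_contra hv
      have := h (κ v)
      rw [if_neg hv, Finset.card_eq_zero, Finset.filter_eq_empty_iff] at this
      exact this (Finset.mem_univ v) rfl
    refine ⟨fun u v huv => ?_,
      Set.Subset.antisymm (Set.range_subset_iff.mpr hmem) fun i hi => ?_⟩
    · have := h (κ u)
      rw [if_pos (hmem u)] at this
      exact Finset.card_le_one.mp this.le u (by simp) v (by simp [huv])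
    · have : 0 < #{v | κ v = i} := by rw [h i, if_pos (Finset.mem_coe.mp hi)]; exact one_pos
      obtain ⟨v, hv⟩ := Finset.card_pos.mp this
      exact ⟨v, (Finset.mem_filter.mp hv).2⟩
  · rintro ⟨hinj, hrange⟩ i
    split_ifs with hi
    · obtain ⟨v, rfl⟩ : i ∈ Set.range κ := hrange.symm.subset hi
      rw [Finset.card_eq_one]
      exact ⟨v, Finset.ext fun u => by simp [hinj.eq_iff]⟩
    · rw [Finset.card_eq_zero, Finset.filter_eq_empty_iff]
      rintro v - rfl
      exact hi (hrange.subset (Set.mem_range_self v))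

lemma coeff_sqfreeMonomial_csf (G : SimpleGraph V) (S : Finset ℕ) :
    MvPowerSeries.coeff (sqfreeMonomial S) (csf G) = Nat.card (V ≃ S) := by
  refine congrArg Nat.cast (Nat.card_congr (.trans (Equiv.subtypeEquivRight fun κ => ?_)
    (injectiveRangeEquiv (S : Set ℕ))))
  simp only [Finset.sum_const, smul_eq_mul, mul_one, card_fiber_eq_sqfreeMonomial_iff]
  exact ⟨And.right, fun h => ⟨fun u v huv => G.ne_of_adj huv ∘ (h.1 ·), h⟩⟩

lemma hasSqfreeCoeffsFactorial_csf (G : SimpleGraph V) :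
    HasSqfreeCoeffsFactorial (Fintype.card V) (csf G) := by
  intro S
  rw [coeff_sqfreeMonomial_csf]
  split_ifs with h
  · rw [Nat.card_eq_fintype_card, Fintype.card_equiv (Fintype.equivOfCardEq (by simp [h]))]
  · have : IsEmpty (V ≃ S) := ⟨fun e => h (by simpa using (Fintype.card_congr e).symm)⟩
    simp

end

theorem stmt_12_general (Gfam : (i : ℕ) → SimpleGraph (Fin i))
    {V : Type} [Fintype V] (G : SimpleGraph V) (n : ℕ) (hn : Fintype.card V = n)
    (a : n.Partition → ℚ)
    (ha : csf G = ∑ l : n.Partition, a l • (l.parts.map (fun m => csf (Gfam m))).prod) :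
    ∑ l : n.Partition, a l = 1 := by
  have hG : HasSqfreeCoeffsFactorial n (csf G) := hn ▸ hasSqfreeCoeffsFactorial_csf G
  have hGl (l : n.Partition) :
      HasSqfreeCoeffsFactorial n (l.parts.map fun m => csf (Gfam m)).prod := by
    have := HasSqfreeCoeffsFactorial.multiset_prod l.parts fun m _ => by
      simpa using hasSqfreeCoeffsFactorial_csf (Gfam m)
    rwa [l.parts_sum] at this
  have hcoeff := congrArg (MvPowerSeries.coeff (sqfreeMonomial (Finset.range n))) ha
  rw [hG, map_sum, Finset.sum_congr rfl fun l _ => by rw [map_smul, hGl], ← Finset.sum_smul,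
    Finset.card_range, if_pos rfl, smul_eq_mul] at hcoeff
  exact (mul_eq_right₀ (by positivity)).mp hcoeff.symm

/-- let `{G_i}` be any family of connected graphs with `G_i` having `i`
vertices, and let `G` be any graph with `n` vertices.  Then the sum over all partitions
`λ ⊢ n` of the coefficients of `X_G` in the chromatic basis `{X_{G_λ}}` equals `1`. -/
theorem stmt_12 (Gfam : (i : ℕ) → SimpleGraph (Fin i))
    (hGfam : ∀ i, 0 < i → (Gfam i).Connected)
    {V : Type} [Fintype V] (G : SimpleGraph V) (n : ℕ) (hn : Fintype.card V = n)
    (a : n.Partition → ℚ)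
    (ha : csf G = ∑ l : n.Partition, a l • (l.parts.map (fun m => csf (Gfam m))).prod) :
    ∑ l : n.Partition, a l = 1 :=
  stmt_12_general Gfam G n hn a ha
end
end

section
/- The tree polynomial of the power-sum symmetric function p_λ is τ_{p_λ}(x) = x^{ℓ(λ)}(x-1)^{|λ|-ℓ(λ)}. -/
open Polynomial

noncomputable section
open scoped Classical

/-!
Specialize `x_0 = ⋯ = x_{k-1} = 1` and all other variables to `0`, keeping only degree `n`.
On homogeneous series this is multiplicative; it sends `p_m` to `k` and `X_{P_m}` to the number
`k (k-1)^(m-1)` of proper `k`-colourings of a path. Applied to `p_λ = Σ_Δ a_Δ X_{P_Δ}` for every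
`k`, it yields the polynomial identity `Σ_Δ a_Δ x^ℓ(Δ) (x-1)^(n-ℓ(Δ)) = x^ℓ(λ)`. Substituting
`x ↦ x/(x-1)` and clearing the denominator `(x-1)^n` turns `x^j (x-1)^(n-j)` into `x^j`, giving
`τ_{p_λ}(x) = x^ℓ(λ) (x-1)^(n-ℓ(λ))`.
-/

namespace TreePolynomial

open Finset

section Specialization

variable {R : Type*} [CommSemiring R]

/-- The degree-`n` part of `f` evaluated at `x_0 = ⋯ = x_{k-1} = 1` and `x_i = 0` for `i ≥ k`. -/
def evalOnes (k n : ℕ) : MvPowerSeries ℕ R →ₗ[R] R :=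
  ∑ d ∈ finsuppAntidiag (range k) n, MvPowerSeries.coeff d

lemma evalOnes_apply (k n : ℕ) (f : MvPowerSeries ℕ R) :
    evalOnes k n f = ∑ d ∈ finsuppAntidiag (range k) n, MvPowerSeries.coeff d f := by
  simp [evalOnes]

lemma mem_finsuppAntidiag_range {k n : ℕ} {d : ℕ →₀ ℕ} :
    d ∈ finsuppAntidiag (range k) n ↔ Finsupp.weight 1 d = n ∧ d.support ⊆ range k := by
  simp only [mem_finsuppAntidiag', Finsupp.weight_apply, Pi.one_apply, smul_eq_mul, mul_one]

lemma evalOnes_one (k : ℕ) : evalOnes k 0 (1 : MvPowerSeries ℕ R) = 1 := by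
  simp [evalOnes_apply, MvPowerSeries.coeff_one]

lemma isWeightedHomogeneous_one : (1 : MvPowerSeries ℕ R).IsWeightedHomogeneous 1 0 := by
  intro d hd
  rw [MvPowerSeries.coeff_one, ite_ne_right_iff] at hd
  rw [hd.1, map_zero]

lemma evalOnes_mul {k p q : ℕ} {f g : MvPowerSeries ℕ R}
    (hf : f.IsWeightedHomogeneous 1 p) (hg : g.IsWeightedHomogeneous 1 q) :
    evalOnes k (p + q) (f * g) = evalOnes k p f * evalOnes k q g := by
  simp only [evalOnes_apply, MvPowerSeries.coeff_mul]
  rw [sum_sigma', sum_mul_sum, ← sum_product']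
  refine sum_bij_ne_zero (fun x _ _ => x.2) ?_ ?_ ?_ (fun _ _ _ => rfl)
  · rintro ⟨d, d₁, d₂⟩ hd hne
    simp only [mem_sigma, HasAntidiagonal.mem_antidiagonal, mem_finsuppAntidiag_range] at hd
    obtain ⟨⟨-, hsupp⟩, rfl⟩ := hd
    simp only [mem_product, mem_finsuppAntidiag_range]
    exact ⟨⟨hf (left_ne_zero_of_mul hne), (Finsupp.support_mono le_self_add).trans hsupp⟩,
      hg (right_ne_zero_of_mul hne), (Finsupp.support_mono le_add_self).trans hsupp⟩
  · rintro ⟨d, x⟩ hd - ⟨d', x'⟩ hd' - rfl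
    simp only [mem_sigma, HasAntidiagonal.mem_antidiagonal] at hd hd'
    rw [← hd.2, ← hd'.2]
  · rintro ⟨d₁, d₂⟩ hd hne
    simp only [mem_product, mem_finsuppAntidiag_range] at hd
    refine ⟨⟨d₁ + d₂, d₁, d₂⟩, ?_, hne, rfl⟩
    simp only [mem_sigma, HasAntidiagonal.mem_antidiagonal, mem_finsuppAntidiag_range, map_add,
      hd.1.1, hd.2.1, true_and, and_true]
    exact Finsupp.support_add.trans (union_subset hd.1.2 hd.2.2)

lemma isWeightedHomogeneous_multiset_prod {F : ℕ → MvPowerSeries ℕ R} {μ : Multiset ℕ}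
    (hF : ∀ m ∈ μ, (F m).IsWeightedHomogeneous 1 m) :
    (μ.map F).prod.IsWeightedHomogeneous 1 μ.sum := by
  induction μ using Multiset.induction_on with
  | empty => exact isWeightedHomogeneous_one
  | cons m μ ih =>
    rw [Multiset.map_cons, Multiset.prod_cons, Multiset.sum_cons]
    exact MvPowerSeries.IsWeightedHomogeneous.mul (hF m (Multiset.mem_cons_self m μ))
      (ih fun x hx => hF x (Multiset.mem_cons_of_mem hx))

lemma evalOnes_multiset_prod (k : ℕ) {F : ℕ → MvPowerSeries ℕ R} {μ : Multiset ℕ}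
    (hF : ∀ m ∈ μ, (F m).IsWeightedHomogeneous 1 m) :
    evalOnes k μ.sum (μ.map F).prod = (μ.map fun m => evalOnes k m (F m)).prod := by
  induction μ using Multiset.induction_on with
  | empty => exact evalOnes_one k
  | cons m μ ih =>
    have hμ : ∀ x ∈ μ, (F x).IsWeightedHomogeneous 1 x :=
      fun x hx => hF x (Multiset.mem_cons_of_mem hx)
    simp only [Multiset.map_cons, Multiset.prod_cons, Multiset.sum_cons]
    rw [evalOnes_mul (hF m (Multiset.mem_cons_self m μ)) (isWeightedHomogeneous_multiset_prod hμ),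
      ih hμ]

end Specialization

lemma isWeightedHomogeneous_psum (m : ℕ) : (psum m).IsWeightedHomogeneous 1 m := by
  intro d hd
  obtain ⟨i, rfl⟩ : ∃ i, d = Finsupp.single i m := by
    by_contra h
    exact hd (if_neg h)
  simp [Finsupp.weight_apply]

lemma evalOnes_psum {k m : ℕ} (hm : m ≠ 0) : evalOnes k m (psum m) = (k : ℚ) := by
  have hfilter : (finsuppAntidiag (range k) m).filter (fun d => ∃ i, d = Finsupp.single i m)
      = (range k).map ⟨fun i => Finsupp.single i m, Finsupp.single_left_injective hm⟩ := by
    ext d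
    simp only [mem_filter, mem_map, mem_finsuppAntidiag_range, Function.Embedding.coeFn_mk]
    constructor
    · rintro ⟨⟨-, hsupp⟩, i, rfl⟩
      exact ⟨i, hsupp (by simp [hm]), rfl⟩
    · rintro ⟨i, hi, rfl⟩
      refine ⟨⟨by simp [Finsupp.weight_apply], ?_⟩, i, rfl⟩
      simpa [Finsupp.support_single, hm] using hi
  rw [evalOnes_apply]
  simp only [MvPowerSeries.coeff_apply, psum]
  rw [sum_boole, hfilter, card_map, card_range]

section Colourings

variable {V : Type} [Fintype V]

def colourContent (κ : V → ℕ) : ℕ →₀ ℕ := ∑ v, Finsupp.single (κ v) 1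

lemma colourContent_apply (κ : V → ℕ) (i : ℕ) :
    colourContent κ i = #{v | κ v = i} := by
  simp [colourContent, Finsupp.single_apply, sum_boole]

lemma weight_colourContent (κ : V → ℕ) :
    Finsupp.weight 1 (colourContent κ) = Fintype.card V := by
  simp [colourContent, Finsupp.weight_apply]

lemma support_colourContent (κ : V → ℕ) : (colourContent κ).support = univ.image κ := by
  ext i
  rw [Finsupp.mem_support_iff, colourContent_apply, ← Nat.pos_iff_ne_zero, card_pos,
    filter_nonempty_iff]
  simp

lemma coeff_csf (G : SimpleGraph V) (d : ℕ →₀ ℕ) :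
    MvPowerSeries.coeff d (csf G) =
      Nat.card {κ : V → ℕ // (∀ u v, G.Adj u v → κ u ≠ κ v) ∧ colourContent κ = d} := by
  have hcontent (κ : V → ℕ) : (∀ i, ∑ v with κ v = i, 1 = d i) ↔
      colourContent κ = d := by
    simp [Finsupp.ext_iff, colourContent_apply]
  exact congrArg Nat.cast <| Nat.card_congr <|
    Equiv.subtypeEquivRight fun κ => and_congr_right fun _ => hcontent κ

lemma isWeightedHomogeneous_csf (G : SimpleGraph V) :
    (csf G).IsWeightedHomogeneous 1 (Fintype.card V) := by
  intro d hd
  rw [coeff_csf, Nat.cast_ne_zero, Nat.card_ne_zero] at hd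
  obtain ⟨⟨κ, -, rfl⟩⟩ := hd.1
  exact weight_colourContent κ

lemma evalOnes_csf (G : SimpleGraph V) (k : ℕ) :
    evalOnes k (Fintype.card V) (csf G) =
      Nat.card {c : V → Fin k // ∀ u v, G.Adj u v → c u ≠ c v} := by
  let content (c : V → Fin k) : ℕ →₀ ℕ := colourContent fun v => (c v : ℕ)
  have hfibre : ∀ d ∈ finsuppAntidiag (range k) (Fintype.card V),
      Nat.card {κ : V → ℕ // (∀ u v, G.Adj u v → κ u ≠ κ v) ∧ colourContent κ = d} =
        #{c : V → Fin k | (∀ u v, G.Adj u v → c u ≠ c v) ∧ content c = d} := by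
    intro d hd
    have hlt {κ : V → ℕ} (hκ : colourContent κ = d) (v : V) : κ v < k := by
      refine mem_range.mp ((mem_finsuppAntidiag_range.mp hd).2 ?_)
      rw [← hκ, support_colourContent]
      exact mem_image_of_mem κ (mem_univ v)
    rw [← Fintype.card_subtype, ← Nat.card_eq_fintype_card]
    exact Nat.card_congr
      { toFun := fun κ => ⟨fun v => ⟨κ.1 v, hlt κ.2.2 v⟩,
          fun u v huv h => κ.2.1 u v huv (congrArg Fin.val h), κ.2.2⟩
        invFun := fun c => ⟨fun v => c.1 v,
          fun u v huv h => c.2.1 u v huv (Fin.val_injective h), c.2.2⟩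
        left_inv := fun _ => rfl
        right_inv := fun _ => rfl }
  have hmaps : ∀ c ∈ ({c | ∀ u v, G.Adj u v → c u ≠ c v} : Finset (V → Fin k)),
      content c ∈ finsuppAntidiag (range k) (Fintype.card V) := by
    intro c _
    refine mem_finsuppAntidiag_range.mpr ⟨weight_colourContent _, ?_⟩
    rw [support_colourContent]
    intro i hi
    obtain ⟨v, -, rfl⟩ := mem_image.mp hi
    exact mem_range.mpr (c v).isLt
  rw [evalOnes_apply, sum_congr rfl fun d hd => by rw [coeff_csf, hfibre d hd],
    ← Nat.cast_sum, Nat.card_eq_fintype_card, Fintype.card_subtype,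
    card_eq_sum_card_fiberwise hmaps]
  simp only [filter_filter]

end Colourings

lemma pathGraph_proper_iff {α : Type*} {m : ℕ} (c : Fin (m + 1) → α) :
    (∀ u v, (SimpleGraph.pathGraph (m + 1)).Adj u v → c u ≠ c v) ↔
      ∀ i : Fin m, c i.castSucc ≠ c i.succ := by
  refine ⟨fun h i => h _ _ (by simp [SimpleGraph.pathGraph_adj]), fun h u v huv => ?_⟩
  rcases SimpleGraph.pathGraph_adj.mp huv with huv | huv
  · convert h ⟨u, by omega⟩ using 2 <;> ext <;> simp; omega
  · convert (h ⟨v, by omega⟩).symm using 2 <;> ext <;> simp; omega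

lemma card_path_colourings (k m : ℕ) :
    Fintype.card {c : Fin (m + 1) → Fin k // ∀ i : Fin m, c i.castSucc ≠ c i.succ} =
      k * (k - 1) ^ m := by
  induction m with
  | zero => simp
  | succ m ih =>
    let e : {c : Fin (m + 2) → Fin k // ∀ i : Fin (m + 1), c i.castSucc ≠ c i.succ} ≃
        Σ c : {c : Fin (m + 1) → Fin k // ∀ i : Fin m, c i.castSucc ≠ c i.succ},
          {x : Fin k // x ≠ c.1 0} :=
      { toFun := fun c => ⟨⟨Fin.tail c.1, fun i => by
          simpa [Fin.tail, ← Fin.succ_castSucc] using c.2 i.succ⟩, c.1 0, c.2 0⟩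
        invFun := fun p => ⟨Fin.cons p.2.1 p.1.1, Fin.cases p.2.2 fun i => by
          simpa using p.1.2 i⟩
        left_inv := fun c => Subtype.ext (Fin.cons_self_tail c.1)
        right_inv := fun _ => rfl }
    simp only [Fintype.card_congr e, Fintype.card_sigma, Fintype.card_subtype_compl,
      Fintype.card_subtype_eq, Fintype.card_fin, sum_const, card_univ, smul_eq_mul, ih]
    ring

lemma evalOnes_csf_pathGraph (k m : ℕ) :
    evalOnes k (m + 1) (csf (SimpleGraph.pathGraph (m + 1))) = (k : ℚ) * ((k : ℚ) - 1) ^ m := by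
  have h := evalOnes_csf (SimpleGraph.pathGraph (m + 1)) k
  rw [Fintype.card_fin] at h
  rw [h, Nat.card_eq_fintype_card,
    Fintype.card_congr (Equiv.subtypeEquivRight pathGraph_proper_iff), card_path_colourings]
  rcases k with _ | k <;> simp

lemma prod_map_mul_pow_sub_one {M : Type*} [CommMonoid M] (x y : M) {μ : Multiset ℕ}
    (hμ : ∀ m ∈ μ, 0 < m) :
    (μ.map fun m => x * y ^ (m - 1)).prod = x ^ μ.card * y ^ (μ.sum - μ.card) := by
  induction μ using Multiset.induction_on with
  | empty => simp
  | cons m μ ih =>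
    have hm := hμ m (Multiset.mem_cons_self m μ)
    have hμ' : ∀ x ∈ μ, 0 < x := fun x hx => hμ x (Multiset.mem_cons_of_mem hx)
    have hle : μ.card ≤ μ.sum := by simpa using Multiset.card_nsmul_le_sum hμ'
    rw [Multiset.map_cons, Multiset.prod_cons, ih hμ', Multiset.card_cons, Multiset.sum_cons,
      show m + μ.sum - (μ.card + 1) = (m - 1) + (μ.sum - μ.card) by omega, pow_succ, pow_add]
    ac_rfl

lemma evalOnes_pp (k : ℕ) {μ : Multiset ℕ} (hμ : ∀ m ∈ μ, 0 < m) :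
    evalOnes k μ.sum (pp μ) = (k : ℚ) ^ μ.card := by
  rw [pp, evalOnes_multiset_prod k fun m _ => isWeightedHomogeneous_psum m,
    Multiset.map_congr rfl fun m hm => evalOnes_psum (hμ m hm).ne', Multiset.map_const',
    Multiset.prod_replicate]

lemma evalOnes_XP (k : ℕ) {μ : Multiset ℕ} (hμ : ∀ m ∈ μ, 0 < m) :
    evalOnes k μ.sum (XP μ) = (k : ℚ) ^ μ.card * ((k : ℚ) - 1) ^ (μ.sum - μ.card) := by
  have hpath (m : ℕ) (hm : 0 < m) :
      evalOnes k m (csf (SimpleGraph.pathGraph m)) = (k : ℚ) * ((k : ℚ) - 1) ^ (m - 1) := by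
    obtain ⟨m, rfl⟩ := Nat.exists_eq_add_one_of_ne_zero hm.ne'
    exact evalOnes_csf_pathGraph k m
  have hhom (m : ℕ) : (csf (SimpleGraph.pathGraph m)).IsWeightedHomogeneous 1 m := by
    intro d hd
    simpa using isWeightedHomogeneous_csf (SimpleGraph.pathGraph m) hd
  rw [XP, evalOnes_multiset_prod k fun m _ => hhom m,
    Multiset.map_congr rfl fun m hm => hpath m (hμ m hm), prod_map_mul_pow_sub_one _ _ hμ]

lemma card_parts_le {n : ℕ} (μ : n.Partition) : μ.parts.card ≤ n := by
  simpa [μ.parts_sum] using Multiset.card_nsmul_le_sum fun _ => μ.parts_pos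

lemma sub_one_pow_mul_div_sub_one_pow {K : Type*} [Field K] {t : K} (ht : t ≠ 1) {j n : ℕ}
    (hj : j ≤ n) : (t - 1) ^ n * (t / (t - 1)) ^ j = t ^ j * (t - 1) ^ (n - j) := by
  have ht' : t - 1 ≠ 0 := sub_ne_zero.mpr ht
  rw [← Nat.add_sub_cancel' hj, pow_add, Nat.add_sub_cancel_left, div_pow]
  field_simp

lemma sum_C_mul_X_pow_eq_of_sum_C_mul_X_pow_mul_X_sub_one_pow {K ι : Type*} [Field K]
    [Infinite K] (s : Finset ι) (a : ι → K) (e : ι → ℕ) {n L : ℕ} (he : ∀ i ∈ s, e i ≤ n)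
    (hL : L ≤ n) (h : ∑ i ∈ s, C (a i) * X ^ e i * (X - 1) ^ (n - e i) = X ^ L) :
    ∑ i ∈ s, C (a i) * X ^ e i = X ^ L * (X - 1) ^ (n - L) := by
  refine Polynomial.eq_of_infinite_eval_eq _ _ ((Set.finite_singleton 1).infinite_compl.mono ?_)
  intro t (ht : t ≠ 1)
  have ht' : t - 1 ≠ 0 := sub_ne_zero.mpr ht
  have hs : t / (t - 1) - 1 = (t - 1)⁻¹ := by field_simp; ring
  have h' := congrArg (fun p => (t - 1) ^ n * p.eval (t / (t - 1))) h
  simp only [eval_finsetSum, eval_mul, eval_pow, eval_C, eval_X, eval_sub, eval_one, hs,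
    mul_sum] at h'
  simp only [Set.mem_ofPred_eq, eval_finsetSum, eval_mul, eval_pow, eval_C, eval_X, eval_sub,
    eval_one, ← sub_one_pow_mul_div_sub_one_pow ht hL, ← h']
  refine sum_congr rfl fun i hi => ?_
  calc a i * t ^ e i
      = a i * ((t - 1) ^ n * (t / (t - 1)) ^ e i) * (t - 1)⁻¹ ^ (n - e i) := by
        rw [sub_one_pow_mul_div_sub_one_pow ht (he i hi), mul_assoc, mul_assoc, inv_pow,
          mul_inv_cancel₀ (pow_ne_zero _ ht'), mul_one]
    _ = (t - 1) ^ n * (a i * (t / (t - 1)) ^ e i * (t - 1)⁻¹ ^ (n - e i)) := by ring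

lemma pow_card_parts_eq_sum {n : ℕ} (l : n.Partition) (a : n.Partition → ℚ)
    (ha : pp l.parts = ∑ d : n.Partition, a d • XP d.parts) (k : ℕ) :
    (k : ℚ) ^ l.parts.card = ∑ d : n.Partition,
      a d * ((k : ℚ) ^ d.parts.card * ((k : ℚ) - 1) ^ (n - d.parts.card)) := by
  have hpp : evalOnes k n (pp l.parts) = (k : ℚ) ^ l.parts.card := by
    simpa only [l.parts_sum] using evalOnes_pp k fun _ => l.parts_pos
  have hXP (d : n.Partition) : evalOnes k n (XP d.parts) =
      (k : ℚ) ^ d.parts.card * ((k : ℚ) - 1) ^ (n - d.parts.card) := by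
    simpa only [d.parts_sum] using evalOnes_XP k fun _ => d.parts_pos
  simpa only [map_sum, map_smul, smul_eq_mul, hpp, hXP] using congrArg (evalOnes k n) ha

end TreePolynomial

/-- the tree polynomial of the power-sum symmetric function `p_λ` is
`τ_{p_λ}(x) = x^{ℓ(λ)} (x-1)^{|λ|-ℓ(λ)}`: if `p_λ = Σ_{Δ ⊢ n} a_Δ X_{P_Δ}` then
`Σ_Δ a_Δ x^{ℓ(Δ)} = x^{ℓ(λ)} (x-1)^{n-ℓ(λ)}`. -/
theorem stmt_17 (n : ℕ) (l : Nat.Partition n) (a : n.Partition → ℚ)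
    (ha : pp l.parts = ∑ d : n.Partition, a d • XP d.parts) :
    basisPoly n a =
      Polynomial.X ^ l.parts.card * (Polynomial.X - 1) ^ (n - l.parts.card) := by
  have hpoly : ∑ d : n.Partition, C (a d) * X ^ d.parts.card * (X - 1) ^ (n - d.parts.card) =
      (X ^ l.parts.card : ℚ[X]) := by
    refine eq_of_infinite_eval_eq _ _
      ((Set.infinite_range_of_injective Nat.cast_injective).mono ?_)
    rintro _ ⟨k, rfl⟩
    simp [eval_finsetSum, TreePolynomial.pow_card_parts_eq_sum l a ha k, mul_assoc]
  exact TreePolynomial.sum_C_mul_X_pow_eq_of_sum_C_mul_X_pow_mul_X_sub_one_pow _ a _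
    (fun d _ => TreePolynomial.card_parts_le d) (TreePolynomial.card_parts_le l) hpoly
end
end

section
/- For any vertex-weighted graph (G,ω), the polynomial obtained by expanding X_{(G,ω)} in the power-sum basis and mapping p_λ ↦ x^{ℓ(λ)} equals the ordinary chromatic polynomial of the underlying unweighted graph G: χ_{(G,ω)} = χ_G. In particular this polynomial is independent of the weight function ω. -/
open Polynomial

noncomputable section
open scoped Classical

/-!
Specialise `x_0 = ⋯ = x_{k-1} = t` and `x_i = 0` for `i ≥ k`. Each `p_m` becomes `k t^m`, so
`p_λ` becomes `k^{ℓ(λ)} t^{|λ|}`. Since all weights are positive, a colouring contributes to the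
specialisation of `X_{(G,ω)}` exactly when it only uses colours `< k`, and then it contributes
`t^{|ω|}`. Comparing coefficients of `t^N` gives `Σ_λ a_λ k^{ℓ(λ)} = χ_G(k)` for every `k ≥ 1`,
and two polynomials agreeing at infinitely many points are equal.
-/

open Finset MvPowerSeries

section ColoringMonomial

variable {V α β : Type*} [Fintype V]

def coloringMonomial (ω : V → ℕ) (κ : V → α) : α →₀ ℕ :=
  ∑ v, Finsupp.single (κ v) (ω v)

lemma coloringMonomial_apply [DecidableEq α] (ω : V → ℕ) (κ : V → α) (i : α) :
    coloringMonomial ω κ i = ∑ v ∈ univ.filter (fun v => κ v = i), ω v := by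
  simp [coloringMonomial, Finsupp.finsetSum_apply, Finsupp.single_apply, Finset.sum_filter]

lemma mapDomain_coloringMonomial (f : α → β) (ω : V → ℕ) (κ : V → α) :
    (coloringMonomial ω κ).mapDomain f = coloringMonomial ω (f ∘ κ) := by
  simp [coloringMonomial, Finsupp.mapDomain_finsetSum]

lemma coloringMonomial_comp_embedding (e : α ↪ β) (ω : V → ℕ) (κ : V → α) :
    coloringMonomial ω (e ∘ κ) = (coloringMonomial ω κ).embDomain e := by
  rw [Finsupp.embDomain_eq_mapDomain, mapDomain_coloringMonomial]

lemma coloringMonomial_const (ω : V → ℕ) (a : α) :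
    coloringMonomial ω (fun _ => a) = Finsupp.single a (∑ v, ω v) := by
  simp [coloringMonomial, Finsupp.single_finsetSum]

lemma mem_range_of_coloringMonomial_eq_embDomain {ω : V → ℕ} (hω : ∀ v, 0 < ω v)
    {κ : V → β} {e : α ↪ β} {d : α →₀ ℕ} (h : coloringMonomial ω κ = d.embDomain e) (v : V) :
    κ v ∈ Set.range e := by
  classical
  have hv : coloringMonomial ω κ (κ v) ≠ 0 := by
    rw [coloringMonomial_apply]
    exact (Finset.sum_pos (fun u _ => hω u) ⟨v, by simp⟩).ne'
  rw [h, ← Finsupp.mem_support_iff, Finsupp.support_embDomain, Finset.mem_map] at hv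
  obtain ⟨a, -, ha⟩ := hv
  exact ⟨a, ha⟩

end ColoringMonomial

section WeightedChromatic

variable {V : Type} [Fintype V] (G : SimpleGraph V) (ω : V → ℕ)

abbrev ProperColoring (α : Type*) := {c : V → α // ∀ u v, G.Adj u v → c u ≠ c v}

lemma coeff_wcsf (d : ℕ →₀ ℕ) :
    coeff d (wcsf G ω) = Nat.card {κ : ProperColoring G ℕ // coloringMonomial ω κ.1 = d} := by
  refine congrArg Nat.cast (Nat.card_congr ?_).symm
  refine (Equiv.subtypeSubtypeEquivSubtypeInter _ (coloringMonomial ω · = d)).trans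
    (Equiv.subtypeEquivRight fun κ => ?_)
  simp only [Finsupp.ext_iff, coloringMonomial_apply]

lemma killCompl_wcsf (hω : ∀ v, 0 < ω v) {σ : Type*} [Fintype σ] (e : σ ↪ ℕ) :
    killCompl e (wcsf G ω) = ∑ c : ProperColoring G σ, monomial (coloringMonomial ω c.1) 1 := by
  classical
  ext d
  rw [coeff_killCompl, coeff_wcsf, map_sum]
  simp only [MvPowerSeries.coeff_monomial, Finset.sum_boole]
  norm_cast
  rw [← Fintype.card_subtype, ← Nat.card_eq_fintype_card]
  refine (Nat.card_congr (Equiv.ofBijective (fun c => ⟨⟨e ∘ c.1.1,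
    fun u v huv => e.injective.ne (c.1.2 u v huv)⟩, by rw [coloringMonomial_comp_embedding, ← c.2]⟩)
    ⟨fun c c' h => ?_, fun κ => ?_⟩)).symm
  · simp only [Subtype.mk.injEq] at h
    exact Subtype.ext (Subtype.ext (e.injective.comp_left h))
  · obtain ⟨⟨κ, hκ⟩, hd⟩ := κ
    choose c hc using mem_range_of_coloringMonomial_eq_embDomain hω hd
    obtain rfl : κ = e ∘ c := funext fun v => (hc v).symm
    refine ⟨⟨⟨c, fun u v huv h => hκ u v huv (congrArg e h)⟩, ?_⟩, rfl⟩
    exact (Finsupp.embDomain_injective e (by rw [← coloringMonomial_comp_embedding, hd])).symm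

end WeightedChromatic

lemma killCompl_psum_s18 {σ : Type*} [Fintype σ] (e : σ ↪ ℕ) {m : ℕ} (hm : m ≠ 0) :
    killCompl e (psum m) = ∑ j : σ, X j ^ m := by
  classical
  ext d
  rw [coeff_killCompl, map_sum]
  simp only [MvPowerSeries.coeff_X_pow]
  change (if ∃ i, d.embDomain e = Finsupp.single i m then (1 : ℚ) else 0) = _
  by_cases hd : ∃ j, d = Finsupp.single j m
  · obtain ⟨j, rfl⟩ := hd
    rw [if_pos ⟨e j, Finsupp.embDomain_single ..⟩]
    simp [Finsupp.single_left_inj hm]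
  · rw [if_neg, Finset.sum_eq_zero fun j _ => if_neg fun h => hd ⟨j, h⟩]
    rintro ⟨i, hi⟩
    have hi' : i ∈ (d.embDomain e).support := by simp [hi, hm]
    rw [Finsupp.support_embDomain, Finset.mem_map] at hi'
    obtain ⟨j, -, rfl⟩ := hi'
    exact hd ⟨j, Finsupp.embDomain_injective e (by rw [hi, Finsupp.embDomain_single])⟩

/-- `x_i ↦ t` for `i < k` and `x_i ↦ 0` for `i ≥ k`. -/
def specializeOnes (k : ℕ) : MvPowerSeries ℕ ℚ →ₐ[ℚ] PowerSeries ℚ :=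
  (rename fun _ : Fin k => ()).comp (killCompl Fin.valEmbedding)

lemma specializeOnes_psum (k : ℕ) {m : ℕ} (hm : m ≠ 0) :
    specializeOnes k (psum m) = (k : ℚ) • PowerSeries.X ^ m := by
  rw [specializeOnes, AlgHom.comp_apply, killCompl_psum_s18 _ hm, map_sum]
  simp only [map_pow, rename_X, Finset.sum_const, Finset.card_univ, Fintype.card_fin,
    Nat.cast_smul_eq_nsmul]
  rfl

lemma specializeOnes_pp (k : ℕ) {μ : Multiset ℕ} (hμ : ∀ m ∈ μ, m ≠ 0) :
    specializeOnes k (pp μ) = (k : ℚ) ^ μ.card • PowerSeries.X ^ μ.sum := by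
  induction μ using Multiset.induction_on with
  | empty => simp [pp]
  | cons m μ ih =>
    have hpp : pp (m ::ₘ μ) = psum m * pp μ := by simp [pp]
    rw [hpp, map_mul, specializeOnes_psum k (hμ m (Multiset.mem_cons_self m μ)),
      ih fun m' hm' => hμ m' (Multiset.mem_cons_of_mem hm'), smul_mul_smul_comm, ← pow_add,
      Multiset.card_cons, Multiset.sum_cons, pow_succ']

lemma specializeOnes_wcsf {V : Type} [Fintype V] (G : SimpleGraph V) {ω : V → ℕ}
    (hω : ∀ v, 0 < ω v) (k : ℕ) :
    specializeOnes k (wcsf G ω) =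
      (Nat.card (ProperColoring G (Fin k)) : ℚ) • PowerSeries.X ^ ∑ v, ω v := by
  rw [specializeOnes, AlgHom.comp_apply, killCompl_wcsf G ω hω, map_sum]
  simp only [rename_monomial, mapDomain_coloringMonomial, Function.comp_def,
    coloringMonomial_const, Finset.sum_const, Finset.card_univ, ← Nat.card_eq_fintype_card,
    Nat.cast_smul_eq_nsmul, PowerSeries.X_pow_eq, PowerSeries.monomial]

lemma eval_basisPoly (n : ℕ) (a : n.Partition → ℚ) (x : ℚ) :
    (basisPoly n a).eval x = ∑ l, a l * x ^ l.parts.card := by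
  simp [basisPoly, Polynomial.eval_finsetSum]

lemma sum_mul_pow_card_parts_eq_card_properColoring {V : Type} [Fintype V]
    (G : SimpleGraph V) {ω : V → ℕ} (hω : ∀ v, 0 < ω v) {N : ℕ} (hN : ∑ v, ω v = N)
    {a : N.Partition → ℚ} (ha : wcsf G ω = ∑ l : N.Partition, a l • pp l.parts) (k : ℕ) :
    ∑ l : N.Partition, a l * (k : ℚ) ^ l.parts.card = Nat.card (ProperColoring G (Fin k)) := by
  have hpp (l : N.Partition) :
      specializeOnes k (pp l.parts) = (k : ℚ) ^ l.parts.card • PowerSeries.X ^ N := by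
    rw [specializeOnes_pp k fun m hm => (l.parts_pos hm).ne', l.parts_sum]
  have h := congrArg (fun F => PowerSeries.coeff N (specializeOnes k F)) ha
  simp only [map_sum, map_smul, hpp, specializeOnes_wcsf G hω, hN,
    PowerSeries.coeff_X_pow_self, smul_eq_mul, mul_one] at h
  exact h.symm

/-- for a vertex-weighted graph `(G,ω)` of total weight `N`, the polynomial
`χ_{(G,ω)} = Σ_λ a_λ x^{ℓ(λ)}` obtained from the power-sum expansion
`X_{(G,ω)} = Σ_{λ ⊢ N} a_λ p_λ` equals the ordinary chromatic polynomial of the underlying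
unweighted graph `G`; in particular it is independent of the weight function `ω`. -/
theorem stmt_18 {V : Type} [Fintype V] (G : SimpleGraph V) (ω : V → ℕ)
    (hω : ∀ v, 0 < ω v) (N : ℕ) (hN : ∑ v, ω v = N)
    (a : N.Partition → ℚ) (ha : wcsf G ω = ∑ l : N.Partition, a l • pp l.parts)
    (P : Polynomial ℚ) (hP : IsChromaticPoly G P) :
    basisPoly N a = P := by
  refine Polynomial.eq_of_infinite_eval_eq _ _ <| Set.infinite_of_injective_forall_mem
    (f := fun k : ℕ => ((k + 1 : ℕ) : ℚ)) (Nat.cast_injective.comp (add_left_injective 1))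
    fun k => ?_
  rw [Set.mem_ofPred_eq, eval_basisPoly, hP (k + 1) k.succ_pos,
    sum_mul_pow_card_parts_eq_card_properColoring G hω hN ha]
end
end
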